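/- arXiv:2401.15801 — 5 statements merged into one kernel-verified Lean document; each statement's English description precedes it below -/
import Mathlib

section
/- For every Borel probability measure μ on ℝ^d (equipped with the ℓ∞ metric) and every α > 0, the lower Wasserstein dimension, the α-entropic dimension and the α-upper Wasserstein dimension satisfy d_*(μ) ≤ d̄_α(μ) ≤ d*_α(μ). -/
open Filter Topology MeasureTheory Set
open scoped ENNReal NNReal

noncomputable section

/-- Minimal number of closed balls of radius `ε` needed to cover `S`. -/
def coverN {X : Type*} [PseudoMetricSpace X] (ε : ℝ) (S : Set X) : ℕ∞ :=
  ⨅ (t : Finset X) (_ : S ⊆ ⋃ x ∈ t, Metric.closedBall x ε), (t.card : ℕ∞)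

/-- The `(ε,τ)`-covering number of a measure `μ`. -/
def measCoverN {X : Type*} [PseudoMetricSpace X] [MeasurableSpace X]
    (μ : Measure X) (ε τ : ℝ) : ℕ∞ :=
  ⨅ (S : Set X) (_ : MeasurableSet S) (_ : ENNReal.ofReal (1 - τ) ≤ μ S), coverN ε S

/-- Extended logarithm `ℝ≥0∞ → EReal`. -/
def elog (x : ℝ≥0∞) : EReal :=
  if x = 0 then ⊥ else if x = ⊤ then ⊤ else ((Real.log x.toReal : ℝ) : EReal)

/-- `log N / log (1/ε)` as an extended real. -/
def dimRatio (N : ℕ∞) (ε : ℝ) : EReal :=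
  elog (N : ℝ≥0∞) * (((Real.log (1 / ε))⁻¹ : ℝ) : EReal)

/-- The `α`-entropic dimension of a measure. -/
def entropicDim {X : Type*} [PseudoMetricSpace X] [MeasurableSpace X]
    (μ : Measure X) (α : ℝ) : EReal :=
  limsup (fun ε : ℝ => dimRatio (measCoverN μ ε (ε ^ α)) ε) (𝓝[>] (0 : ℝ))

/-- The `α`-upper Wasserstein dimension of a measure. -/
def upperWDim {X : Type*} [PseudoMetricSpace X] [MeasurableSpace X]
    (μ : Measure X) (α : ℝ) : EReal :=
  sInf {x : EReal | ∃ s : ℝ, x = (s : EReal) ∧ 2 * α < s ∧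
    limsup (fun ε : ℝ => dimRatio (measCoverN μ ε (ε ^ (s * α / (s - 2 * α)))) ε)
      (𝓝[>] (0 : ℝ)) ≤ (s : EReal)}

/-- The lower Wasserstein dimension of a measure. -/
def lowerWDim {X : Type*} [PseudoMetricSpace X] [MeasurableSpace X]
    (μ : Measure X) : EReal :=
  limsup (fun τ : ℝ =>
    liminf (fun ε : ℝ => dimRatio (measCoverN μ ε τ) ε) (𝓝[>] (0 : ℝ))) (𝓝[>] (0 : ℝ))

/-- The support of a measure: points all of whose neighbourhoods have positive mass. -/
def msupport {X : Type*} [PseudoMetricSpace X] [MeasurableSpace X] (μ : Measure X) : Set X :=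
  {x | ∀ r : ℝ, 0 < r → 0 < μ (Metric.ball x r)}

/-- The upper Minkowski dimension of (the support of) a measure. -/
def minkowskiDim {X : Type*} [PseudoMetricSpace X] [MeasurableSpace X]
    (μ : Measure X) : EReal :=
  limsup (fun ε : ℝ => dimRatio (coverN ε (msupport μ)) ε) (𝓝[>] (0 : ℝ))

/-- The upper packing dimension of a measure. -/
def packingDim {X : Type*} [PseudoMetricSpace X] [MeasurableSpace X]
    (μ : Measure X) : EReal :=
  essSup (fun x =>
    limsup (fun r : ℝ => elog (μ (Metric.closedBall x r)) * (((Real.log r)⁻¹ : ℝ) : EReal))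
      (𝓝[>] (0 : ℝ))) μ

/-- The lower regularity dimension of a measure. -/
def lowerRegDim {X : Type*} [PseudoMetricSpace X] [MeasurableSpace X]
    (μ : Measure X) : EReal :=
  sSup {x : EReal | ∃ s : ℝ, x = (s : EReal) ∧ ∃ C : ℝ, 0 < C ∧
    ∀ x0 ∈ msupport μ, ∀ r R : ℝ, 0 < r → r < R →
      ENNReal.ofReal (C * (R / r) ^ s) ≤
        μ (Metric.closedBall x0 R) / μ (Metric.closedBall x0 r)}

/-- Partial derivative in coordinate `i`. -/
def pderiv' {d : ℕ} (i : Fin d) (f : (Fin d → ℝ) → ℝ) : (Fin d → ℝ) → ℝ :=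
  fun x => fderiv ℝ f x (Pi.single i 1)

/-- Multi-index partial derivative `∂^s f`. -/
def mpderiv {d : ℕ} (s : Fin d → ℕ) (f : (Fin d → ℝ) → ℝ) : (Fin d → ℝ) → ℝ :=
  (List.finRange d).foldr (fun i g => (pderiv' i)^[s i] g) f

/-- The `β`-Hölder norm of `f : ℝ^d → ℝ` (with `ℓ∞` distances), valued in `ℝ≥0∞`. -/
def holderNorm {d : ℕ} (β : ℝ) (f : (Fin d → ℝ) → ℝ) : ℝ≥0∞ :=
  (∑' s : {s : Fin d → ℕ // ∑ i, s i ≤ ⌊β⌋₊}, ⨆ x : Fin d → ℝ, (‖mpderiv s.1 f x‖₊ : ℝ≥0∞)) +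
  ∑' s : {s : Fin d → ℕ // ∑ i, s i = ⌊β⌋₊}, ⨆ (x : Fin d → ℝ) (y : Fin d → ℝ) (_ : x ≠ y),
      (‖mpderiv s.1 f x - mpderiv s.1 f y‖₊ : ℝ≥0∞) / (nndist x y : ℝ≥0∞) ^ (β - (⌊β⌋₊ : ℝ))

/-- The class `H^β(ℝ^d, ℝ, C)` of `β`-Hölder functions with norm at most `C`. -/
def HolderClass (d : ℕ) (β C : ℝ) : Set ((Fin d → ℝ) → ℝ) :=
  {f | ContDiff ℝ (⌊β⌋₊ : ℕ) f ∧ holderNorm β f ≤ ENNReal.ofReal C}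

/-- The integral probability metric `‖P - Q‖_F`. -/
def ipm {X : Type*} [MeasurableSpace X] (F : Set (X → ℝ)) (P Q : Measure X) : ℝ :=
  ⨆ f : F, |∫ x, f.1 x ∂P - ∫ x, f.1 x ∂Q|

/-- The empirical measure of a sample `x : Fin n → X`. -/
def empMeas {X : Type*} [MeasurableSpace X] {n : ℕ} (x : Fin n → X) : Measure X :=
  (n : ℝ≥0∞)⁻¹ • ∑ i : Fin n, Measure.dirac (x i)

/-- Total variation distance between two measures. -/
def tvDist {X : Type*} [MeasurableSpace X] (P Q : Measure X) : ℝ :=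
  ⨆ A : {A : Set X // MeasurableSet A}, |(P A.1).toReal - (Q A.1).toReal|

end

open Filter Topology MeasureTheory Set
open scoped ENNReal

/-!
Both inequalities come from the fact that the `(ε, τ)`-covering number of a measure decreases
as the allowed mass loss `τ` grows. For fixed `τ > 0` we have `ε ^ α ≤ τ` once `ε` is small,
so the covering numbers defining the entropic dimension dominate those at level `τ`, and a
`liminf` is at most a `limsup`. For `s > 2α` the exponent `sα / (s - 2α)` is at least `α`,
so `ε ^ (sα / (s - 2α)) ≤ ε ^ α` for `ε < 1`, and every admissible `s` in the definition of the
upper Wasserstein dimension bounds the entropic dimension.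
-/

lemma elog_mono : Monotone elog := by
  intro x y h
  unfold elog
  rcases eq_or_ne x 0 with hx | hx
  · simp [hx]
  have hy0 : y ≠ 0 := ne_bot_of_le_ne_bot hx h
  rcases eq_or_ne y ⊤ with hy | hy
  · simp [hy]
  have hx' : x ≠ ⊤ := ne_top_of_le_ne_top hy h
  simp only [if_neg hx, if_neg hx', if_neg hy0, if_neg hy, EReal.coe_le_coe_iff]
  exact Real.log_le_log (ENNReal.toReal_pos hx hx') (ENNReal.toReal_mono hy h)

lemma dimRatio_mono_left {ε : ℝ} (hε : ε ∈ Ioo 0 1) : Monotone (dimRatio · ε) := by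
  intro N M h
  have hlog : 0 < Real.log (1 / ε) := Real.log_pos (one_lt_one_div hε.1 hε.2)
  exact mul_le_mul_of_nonneg_right (elog_mono (by exact_mod_cast h))
    (EReal.coe_nonneg.mpr (inv_nonneg.mpr hlog.le))

lemma eventually_mem_Ioo_zero_one : ∀ᶠ ε in 𝓝[>] (0 : ℝ), ε ∈ Ioo 0 1 :=
  Ioo_mem_nhdsGT one_pos

lemma eventually_rpow_le {α τ : ℝ} (hα : 0 < α) (hτ : 0 < τ) :
    ∀ᶠ ε in 𝓝[>] (0 : ℝ), ε ^ α ≤ τ := by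
  have hcont : Tendsto (· ^ α) (𝓝 (0 : ℝ)) (𝓝 0) := by
    simpa [Real.zero_rpow hα.ne'] using (Real.continuousAt_rpow_const 0 α (Or.inr hα.le)).tendsto
  exact nhdsWithin_le_nhds ((hcont.eventually (gt_mem_nhds hτ)).mono fun _ => le_of_lt)

lemma le_div_sub_two_mul {s α : ℝ} (hs : 2 * α < s) : α ≤ s * α / (s - 2 * α) := by
  rw [le_div_iff₀ (by linarith)]
  nlinarith [sq_nonneg α]

section

variable {X : Type*} [PseudoMetricSpace X] [MeasurableSpace X]

lemma measCoverN_antitone (μ : Measure X) (ε : ℝ) : Antitone (measCoverN μ ε) := by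
  intro τ τ' h
  refine le_iInf fun S => le_iInf fun hS => le_iInf fun hmass => ?_
  exact iInf₂_le_of_le S hS (iInf_le_of_le
    ((ENNReal.ofReal_le_ofReal (by linarith)).trans hmass) le_rfl)

lemma dimRatio_measCoverN_antitone (μ : Measure X) {ε : ℝ} (hε : ε ∈ Ioo 0 1) :
    Antitone fun τ => dimRatio (measCoverN μ ε τ) ε :=
  (dimRatio_mono_left hε).comp_antitone (measCoverN_antitone μ ε)

theorem lowerWDim_le_entropicDim (μ : Measure X) {α : ℝ} (hα : 0 < α) :
    lowerWDim μ ≤ entropicDim μ α := by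
  refine limsup_le_of_le (by isBoundedDefault) ?_
  filter_upwards [self_mem_nhdsWithin] with τ (hτ : 0 < τ)
  calc liminf (fun ε => dimRatio (measCoverN μ ε τ) ε) (𝓝[>] 0)
      ≤ liminf (fun ε => dimRatio (measCoverN μ ε (ε ^ α)) ε) (𝓝[>] 0) := by
        refine liminf_le_liminf ?_ (by isBoundedDefault) (by isBoundedDefault)
        filter_upwards [eventually_mem_Ioo_zero_one, eventually_rpow_le hα hτ] with ε hε hετ
        exact dimRatio_measCoverN_antitone μ hε hετ
    _ ≤ entropicDim μ α := liminf_le_limsup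

theorem entropicDim_le_upperWDim (μ : Measure X) (α : ℝ) :
    entropicDim μ α ≤ upperWDim μ α := by
  refine le_sInf ?_
  rintro _ ⟨s, rfl, hs, hlimsup⟩
  refine le_trans (limsup_le_limsup ?_ (by isBoundedDefault) (by isBoundedDefault)) hlimsup
  filter_upwards [eventually_mem_Ioo_zero_one] with ε hε
  exact dimRatio_measCoverN_antitone μ hε
    (Real.rpow_le_rpow_of_exponent_ge hε.1 hε.2.le (le_div_sub_two_mul hs))

end

theorem lowerWDim_le_entropicDim_le_upperWDim_general
    (d : ℕ) (μ : Measure (Fin d → ℝ)) (α : ℝ) (hα : 0 < α) :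
    lowerWDim μ ≤ entropicDim μ α ∧ entropicDim μ α ≤ upperWDim μ α :=
  ⟨lowerWDim_le_entropicDim μ hα, entropicDim_le_upperWDim μ α⟩

/-- For every Borel probability measure `μ` on `ℝ^d` (with the `ℓ∞` metric)
and every `α > 0`, the lower Wasserstein dimension, the `α`-entropic dimension and the
`α`-upper Wasserstein dimension satisfy `d_*(μ) ≤ d̄_α(μ) ≤ d*_α(μ)`. -/
theorem lowerWDim_le_entropicDim_le_upperWDim
    (d : ℕ) (μ : Measure (Fin d → ℝ)) [IsProbabilityMeasure μ] (α : ℝ) (hα : 0 < α) :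
    lowerWDim μ ≤ entropicDim μ α ∧ entropicDim μ α ≤ upperWDim μ α :=
  lowerWDim_le_entropicDim_le_upperWDim_general d μ α hα
end

section
/- Let μ be a Borel probability measure on ℝ^d, ν a Borel probability measure on ℝ^ℓ, and let Ẽ: ℝ^d → ℝ^ℓ and D̃: ℝ^ℓ → ℝ^d be Borel measurable maps (in the paper, Hölder continuous). If the law of (X, Ẽ(X)) with X ∼ μ equals the law of (D̃(Z), Z) with Z ∼ ν, then D̃(Ẽ(x)) = x for μ-almost every x ∈ ℝ^d, and Ẽ(D̃(z)) = z for ν-almost every z ∈ ℝ^ℓ. -/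
open Filter Topology MeasureTheory Set
open scoped ENNReal NNReal

open Filter Topology MeasureTheory Set
open scoped ENNReal

/-!
The coupling `(X, Ẽ X) ∼ (D̃ Z, Z)` is concentrated on the graph `{(x, z) | D̃ z = x}` of `D̃`,
since `(D̃ Z, Z)` always lies on it; hence so is `(X, Ẽ X)`, i.e. `D̃ (Ẽ X) = X` almost surely.
Swapping the two coordinates turns the hypothesis into the same one with the roles of
`(μ, Ẽ)` and `(ν, D̃)` exchanged, which gives the other identity.
-/

namespace MeasureTheory.Measure

variable {α β : Type*} [MeasurableSpace α] [MeasurableSpace β] {μ : Measure α} {ν : Measure β}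
  {f : α → β} {g : β → α}

theorem ae_leftInverse_of_map_graph_eq [MeasurableEq α] (hf : AEMeasurable f μ)
    (hg : Measurable g) (h : μ.map (fun x => (x, f x)) = ν.map (fun y => (g y, y))) :
    ∀ᵐ x ∂μ, g (f x) = x := by
  have hgraph : ∀ᵐ p ∂ν.map (fun y => (g y, y)), g p.2 = p.1 :=
    (ae_map_iff (hg.prodMk measurable_id).aemeasurable
      (measurableSet_eq_fun (hg.comp measurable_snd) measurable_fst)).2 (ae_of_all _ fun _ => rfl)
  rw [← h] at hgraph
  exact ae_of_ae_map (aemeasurable_id.prodMk hf) hgraph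

theorem map_graph_eq_symm (hf : AEMeasurable f μ) (hg : Measurable g)
    (h : μ.map (fun x => (x, f x)) = ν.map (fun y => (g y, y))) :
    ν.map (fun y => (y, g y)) = μ.map (fun x => (f x, x)) := by
  have hswap := congrArg (map Prod.swap) h
  rw [map_map (f := fun y => (g y, y)) measurable_swap (hg.prodMk measurable_id),
    AEMeasurable.map_map_of_aemeasurable (f := fun x => (x, f x))
      measurable_swap.aemeasurable (aemeasurable_id.prodMk hf)] at hswap
  exact hswap.symm

end MeasureTheory.Measure

open Measure

theorem encoder_decoder_ae_inverse_general
    (d l : ℕ) (μ : Measure (Fin d → ℝ)) (ν : Measure (Fin l → ℝ))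
    (E : (Fin d → ℝ) → (Fin l → ℝ)) (D : (Fin l → ℝ) → (Fin d → ℝ))
    (hE : Measurable E) (hD : Measurable D)
    (h : μ.map (fun x => (x, E x)) = ν.map (fun z => (D z, z))) :
    (∀ᵐ x ∂μ, D (E x) = x) ∧ (∀ᵐ z ∂ν, E (D z) = z) :=
  ⟨ae_leftInverse_of_map_graph_eq hE.aemeasurable hD h,
    ae_leftInverse_of_map_graph_eq hD.aemeasurable hE (map_graph_eq_symm hE.aemeasurable hD h)⟩

/-- If the law of `(X, Ẽ(X))` with `X ∼ μ` equals the law of `(D̃(Z), Z)`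
with `Z ∼ ν`, then `D̃ ∘ Ẽ = id` μ-a.e. and `Ẽ ∘ D̃ = id` ν-a.e. -/
theorem encoder_decoder_ae_inverse
    (d l : ℕ) (μ : Measure (Fin d → ℝ)) (ν : Measure (Fin l → ℝ))
    [IsProbabilityMeasure μ] [IsProbabilityMeasure ν]
    (E : (Fin d → ℝ) → (Fin l → ℝ)) (D : (Fin l → ℝ) → (Fin d → ℝ))
    (hE : Measurable E) (hD : Measurable D)
    (h : μ.map (fun x => (x, E x)) = ν.map (fun z => (D z, z))) :
    (∀ᵐ x ∂μ, D (E x) = x) ∧ (∀ᵐ z ∂ν, E (D z) = z) :=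
  encoder_decoder_ae_inverse_general d l μ ν E D hE hD h
end

section
/- Let β > 0 and Ψ = H^β(ℝ^{d+ℓ}, ℝ, 1). Let μ and μ′ be Borel probability measures on [0,1]^d, let ν and ν′ be Borel probability measures on [0,1]^ℓ, let ℰ be a nonempty class of Borel measurable maps ℝ^d → ℝ^ℓ, and 𝒟 a nonempty class of Borel measurable maps ℝ^ℓ → ℝ^d. For a probability measure P on ℝ^d and E ∈ ℰ, write (P, E_♯P) for the law of (X, E(X)) with X ∼ P; for a probability measure Q on ℝ^ℓ and D ∈ 𝒟, write (D_♯Q, Q) for the law of (D(Z), Z) with Z ∼ Q. Set F₁ = { x ↦ ψ(x, E(x)) : ψ ∈ Ψ, E ∈ ℰ } and F₂ = { z ↦ ψ(D(z), z) : ψ ∈ Ψ, D ∈ 𝒟 }. (i) If (D̂, Ê) ∈ 𝒟 × ℰ attains the minimum of (D, E) ↦ ‖(μ′, E_♯μ′) − (D_♯ν, ν)‖_Ψ, then ‖(μ, Ê_♯μ) − (D̂_♯ν, ν)‖_Ψ ≤ inf_{D ∈ 𝒟, E ∈ ℰ} ‖(μ, E_♯μ) − (D_♯ν, ν)‖_Ψ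 + 2‖μ′ − μ‖_{F₁}. (ii) If (D̂, Ê) ∈ 𝒟 × ℰ attains the minimum of (D, E) ↦ ‖(μ′, E_♯μ′) − (D_♯ν′, ν′)‖_Ψ, then ‖(μ, Ê_♯μ) − (D̂_♯ν, ν)‖_Ψ ≤ inf_{D ∈ 𝒟, E ∈ ℰ} ‖(μ, E_♯μ) − (D_♯ν, ν)‖_Ψ + 2‖μ′ − μ‖_{F₁} + 2‖ν′ − ν‖_{F₂}. (In the paper, μ′ and ν′ are the empirical measures μ̂_n and ν̂_m.) -/
open Filter Topology MeasureTheory Set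
open scoped ENNReal NNReal

open Filter Topology MeasureTheory Set
open scoped ENNReal

/-- The joint law of `(X, E(X))` with `X ∼ P`, as a measure on `ℝ^{d+l}` (coordinates
appended). -/
noncomputable def jointXE {d l : ℕ} (P : Measure (Fin d → ℝ))
    (E : (Fin d → ℝ) → (Fin l → ℝ)) : Measure (Fin (d + l) → ℝ) :=
  P.map (fun x => Fin.append x (E x))

/-- The joint law of `(D(Z), Z)` with `Z ∼ Q`, as a measure on `ℝ^{d+l}` (coordinates
appended). -/
noncomputable def jointDZ {d l : ℕ} (Q : Measure (Fin l → ℝ))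
    (D : (Fin l → ℝ) → (Fin d → ℝ)) : Measure (Fin (d + l) → ℝ) :=
  Q.map (fun z => Fin.append (D z) z)


/-! Moving from the sampled measures `(μ', ν')` to `(μ, ν)` changes the BiGAN loss of every pair
`(D, E)` by at most `‖μ' - μ‖_{F₁} + ‖ν' - ν‖_{F₂}`: a test function `ψ` integrated against
`(P, E_♯P)` is the function `x ↦ ψ(x, E x)` of `F₁` integrated against `P`, and similarly for
the decoder side. A minimiser of a loss that is uniformly `δ`-close to the true loss is then a
`2δ`-minimiser of the true loss. -/

lemma le_ciInf_add_two_mul_of_abs_sub_le {ι : Type*} {L L' : ι → ℝ} {δ : ℝ} {i₀ : ι}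
    (hmin : ∀ i, L' i₀ ≤ L' i) (hclose : ∀ i, |L i - L' i| ≤ δ) :
    L i₀ ≤ (⨅ i, L i) + 2 * δ := by
  have : Nonempty ι := ⟨i₀⟩
  have hlow : L i₀ - 2 * δ ≤ ⨅ i, L i := le_ciInf fun i => by
    linarith [abs_le.1 (hclose i₀), abs_le.1 (hclose i), hmin i]
  linarith

section IPM

variable {X : Type*} [MeasurableSpace X]

lemma ipm_nonneg (F : Set (X → ℝ)) (P Q : Measure X) : 0 ≤ ipm F P Q :=
  Real.iSup_nonneg fun _ => abs_nonneg _

lemma ipm_comm (F : Set (X → ℝ)) (P Q : Measure X) : ipm F P Q = ipm F Q P := by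
  simp only [ipm, abs_sub_comm]

lemma ipm_self (F : Set (X → ℝ)) (P : Measure X) : ipm F P P = 0 := by
  simp [ipm]

lemma ipm_le {F : Set (X → ℝ)} {P Q : Measure X} {c : ℝ} (hc : 0 ≤ c)
    (h : ∀ f ∈ F, |∫ x, f x ∂P - ∫ x, f x ∂Q| ≤ c) : ipm F P Q ≤ c :=
  Real.iSup_le (fun f => h f.1 f.2) hc

lemma abs_integral_sub_le_ipm {F : Set (X → ℝ)} {P Q : Measure X}
    [IsFiniteMeasure P] [IsFiniteMeasure Q] {C : ℝ} (hF : ∀ f ∈ F, ∀ x, |f x| ≤ C)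
    {f : X → ℝ} (hf : f ∈ F) : |∫ x, f x ∂P - ∫ x, f x ∂Q| ≤ ipm F P Q := by
  have hbdd : BddAbove (Set.range fun g : F => |∫ x, g.1 x ∂P - ∫ x, g.1 x ∂Q|) := by
    refine ⟨C * P.real Set.univ + C * Q.real Set.univ, ?_⟩
    rintro _ ⟨g, rfl⟩
    have hg : ∀ μ : Measure X, ∀ᵐ x ∂μ, ‖g.1 x‖ ≤ C := fun μ => ae_of_all μ (hF g.1 g.2)
    exact (abs_sub _ _).trans (add_le_add (norm_integral_le_of_norm_le_const (hg P))
      (norm_integral_le_of_norm_le_const (hg Q)))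
  exact le_ciSup hbdd ⟨f, hf⟩

end IPM

lemma mpderiv_zero {n : ℕ} (f : (Fin n → ℝ) → ℝ) : mpderiv 0 f = f := by
  simp [mpderiv]

lemma abs_le_of_mem_holderClass {n : ℕ} {β C : ℝ} (hC : 0 ≤ C) {ψ : (Fin n → ℝ) → ℝ}
    (hψ : ψ ∈ HolderClass n β C) (x : Fin n → ℝ) : |ψ x| ≤ C := by
  have hsup : (‖ψ x‖₊ : ℝ≥0∞) ≤ holderNorm β ψ := by
    refine le_trans ?_ le_self_add
    refine le_trans ?_ (ENNReal.le_tsum (⟨0, by simp⟩ : {s : Fin n → ℕ // ∑ i, s i ≤ ⌊β⌋₊}))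
    simpa only [mpderiv_zero] using le_iSup (fun y => (‖ψ y‖₊ : ℝ≥0∞)) x
  have hx : ENNReal.ofReal |ψ x| ≤ ENNReal.ofReal C := by
    rw [← Real.enorm_eq_ofReal_abs]
    exact hsup.trans hψ.2
  exact (ENNReal.ofReal_le_ofReal_iff hC).1 hx

section JointLaws

variable {d l : ℕ}

/-- The class `F₁` of the paper. -/
def encoderTestClass (Ψ : Set ((Fin (d + l) → ℝ) → ℝ)) (ℰ : Set ((Fin d → ℝ) → (Fin l → ℝ))) :
    Set ((Fin d → ℝ) → ℝ) :=
  {h | ∃ ψ ∈ Ψ, ∃ E ∈ ℰ, h = fun x => ψ (Fin.append x (E x))}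

/-- The class `F₂` of the paper. -/
def decoderTestClass (Ψ : Set ((Fin (d + l) → ℝ) → ℝ)) (𝒟 : Set ((Fin l → ℝ) → (Fin d → ℝ))) :
    Set ((Fin l → ℝ) → ℝ) :=
  {h | ∃ ψ ∈ Ψ, ∃ D ∈ 𝒟, h = fun z => ψ (Fin.append (D z) z)}

lemma measurable_append_graph {E : (Fin d → ℝ) → (Fin l → ℝ)} (hE : Measurable E) :
    Measurable fun x => Fin.append x (E x) :=
  (Fin.continuous_append d l).measurable.comp (measurable_id.prodMk hE)

lemma measurable_append_graph_swap {D : (Fin l → ℝ) → (Fin d → ℝ)} (hD : Measurable D) :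
    Measurable fun z => Fin.append (D z) z :=
  (Fin.continuous_append d l).measurable.comp (hD.prodMk measurable_id)

lemma isProbabilityMeasure_jointXE (P : Measure (Fin d → ℝ)) [IsProbabilityMeasure P]
    {E : (Fin d → ℝ) → (Fin l → ℝ)} (hE : Measurable E) :
    IsProbabilityMeasure (jointXE P E) :=
  Measure.isProbabilityMeasure_map (measurable_append_graph hE).aemeasurable

lemma isProbabilityMeasure_jointDZ (Q : Measure (Fin l → ℝ)) [IsProbabilityMeasure Q]
    {D : (Fin l → ℝ) → (Fin d → ℝ)} (hD : Measurable D) :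
    IsProbabilityMeasure (jointDZ Q D) :=
  Measure.isProbabilityMeasure_map (measurable_append_graph_swap hD).aemeasurable

lemma integral_jointXE (P : Measure (Fin d → ℝ)) {E : (Fin d → ℝ) → (Fin l → ℝ)}
    (hE : Measurable E) {ψ : (Fin (d + l) → ℝ) → ℝ} (hψ : Measurable ψ) :
    ∫ y, ψ y ∂(jointXE P E) = ∫ x, ψ (Fin.append x (E x)) ∂P :=
  integral_map (measurable_append_graph hE).aemeasurable hψ.aestronglyMeasurable

lemma integral_jointDZ (Q : Measure (Fin l → ℝ)) {D : (Fin l → ℝ) → (Fin d → ℝ)}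
    (hD : Measurable D) {ψ : (Fin (d + l) → ℝ) → ℝ} (hψ : Measurable ψ) :
    ∫ y, ψ y ∂(jointDZ Q D) = ∫ z, ψ (Fin.append (D z) z) ∂Q :=
  integral_map (measurable_append_graph_swap hD).aemeasurable hψ.aestronglyMeasurable

variable {Ψ : Set ((Fin (d + l) → ℝ) → ℝ)} {C : ℝ}
  {ℰ : Set ((Fin d → ℝ) → (Fin l → ℝ))} {𝒟 : Set ((Fin l → ℝ) → (Fin d → ℝ))}
  (P P' : Measure (Fin d → ℝ)) (Q Q' : Measure (Fin l → ℝ))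
  [IsProbabilityMeasure P] [IsProbabilityMeasure P']
  [IsProbabilityMeasure Q] [IsProbabilityMeasure Q']

lemma ipm_jointXE_jointDZ_le (hΨb : ∀ ψ ∈ Ψ, ∀ y, |ψ y| ≤ C) (hΨm : ∀ ψ ∈ Ψ, Measurable ψ)
    {E : (Fin d → ℝ) → (Fin l → ℝ)} (hE : E ∈ ℰ) (hEm : Measurable E)
    {D : (Fin l → ℝ) → (Fin d → ℝ)} (hD : D ∈ 𝒟) (hDm : Measurable D) :
    ipm Ψ (jointXE P E) (jointDZ Q D) ≤ ipm Ψ (jointXE P' E) (jointDZ Q' D) +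
      ipm (encoderTestClass Ψ ℰ) P' P + ipm (decoderTestClass Ψ 𝒟) Q' Q := by
  have := isProbabilityMeasure_jointXE P' hEm
  have := isProbabilityMeasure_jointDZ Q' hDm
  have hF₁ : ∀ f ∈ encoderTestClass Ψ ℰ, ∀ x, |f x| ≤ C := by
    rintro _ ⟨ψ, hψ, E, -, rfl⟩ x
    exact hΨb ψ hψ _
  have hF₂ : ∀ f ∈ decoderTestClass Ψ 𝒟, ∀ z, |f z| ≤ C := by
    rintro _ ⟨ψ, hψ, D, -, rfl⟩ z
    exact hΨb ψ hψ _
  refine ipm_le (add_nonneg (add_nonneg (ipm_nonneg _ _ _) (ipm_nonneg _ _ _))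
    (ipm_nonneg _ _ _)) fun ψ hψ => ?_
  have hψm := hΨm ψ hψ
  have h₂ := abs_integral_sub_le_ipm (P := jointXE P' E) (Q := jointDZ Q' D) hΨb hψ
  rw [integral_jointXE P hEm hψm, integral_jointDZ Q hDm hψm]
  rw [integral_jointXE P' hEm hψm, integral_jointDZ Q' hDm hψm] at h₂
  have h₁ := abs_integral_sub_le_ipm (P := P') (Q := P) hF₁ ⟨ψ, hψ, E, hE, rfl⟩
  have h₃ := abs_integral_sub_le_ipm (P := Q') (Q := Q) hF₂ ⟨ψ, hψ, D, hD, rfl⟩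
  rw [abs_sub_comm] at h₁
  have := dist_triangle4 (∫ x, ψ (Fin.append x (E x)) ∂P) (∫ x, ψ (Fin.append x (E x)) ∂P')
    (∫ z, ψ (Fin.append (D z) z) ∂Q') (∫ z, ψ (Fin.append (D z) z) ∂Q)
  simp only [Real.dist_eq] at this
  linarith

lemma ipm_jointXE_jointDZ_le_iInf_add (hΨb : ∀ ψ ∈ Ψ, ∀ y, |ψ y| ≤ C)
    (hΨm : ∀ ψ ∈ Ψ, Measurable ψ) (hℰm : ∀ E ∈ ℰ, Measurable E) (h𝒟m : ∀ D ∈ 𝒟, Measurable D)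
    {Dhat : (Fin l → ℝ) → (Fin d → ℝ)} (hDhat : Dhat ∈ 𝒟)
    {Ehat : (Fin d → ℝ) → (Fin l → ℝ)} (hEhat : Ehat ∈ ℰ)
    (hmin : ∀ D ∈ 𝒟, ∀ E ∈ ℰ,
      ipm Ψ (jointXE P' Ehat) (jointDZ Q' Dhat) ≤ ipm Ψ (jointXE P' E) (jointDZ Q' D)) :
    ipm Ψ (jointXE P Ehat) (jointDZ Q Dhat) ≤
      (⨅ DE : 𝒟 × ℰ, ipm Ψ (jointXE P DE.2.1) (jointDZ Q DE.1.1)) +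
        2 * ipm (encoderTestClass Ψ ℰ) P' P + 2 * ipm (decoderTestClass Ψ 𝒟) Q' Q := by
  have hclose : ∀ DE : 𝒟 × ℰ,
      |ipm Ψ (jointXE P DE.2.1) (jointDZ Q DE.1.1) - ipm Ψ (jointXE P' DE.2.1) (jointDZ Q' DE.1.1)|
        ≤ ipm (encoderTestClass Ψ ℰ) P' P + ipm (decoderTestClass Ψ 𝒟) Q' Q := by
    rintro ⟨⟨D, hD⟩, ⟨E, hE⟩⟩
    have h := ipm_jointXE_jointDZ_le P P' Q Q' hΨb hΨm hE (hℰm E hE) hD (h𝒟m D hD)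
    have h' := ipm_jointXE_jointDZ_le P' P Q' Q hΨb hΨm hE (hℰm E hE) hD (h𝒟m D hD)
    rw [ipm_comm _ P, ipm_comm _ Q] at h'
    exact abs_sub_le_iff.2 ⟨by linarith, by linarith⟩
  have := le_ciInf_add_two_mul_of_abs_sub_le (i₀ := ((⟨Dhat, hDhat⟩, ⟨Ehat, hEhat⟩) : 𝒟 × ℰ))
    (fun DE => hmin _ DE.1.2 _ DE.2.2) hclose
  linarith

end JointLaws

theorem bigan_oracle_inequalities_general
    (d l : ℕ) (β : ℝ)
    (μ μ' : Measure (Fin d → ℝ)) (ν ν' : Measure (Fin l → ℝ))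
    [IsProbabilityMeasure μ] [IsProbabilityMeasure μ']
    [IsProbabilityMeasure ν] [IsProbabilityMeasure ν']
    (ℰ : Set ((Fin d → ℝ) → (Fin l → ℝ)))
    (hℰm : ∀ E ∈ ℰ, Measurable E)
    (𝒟 : Set ((Fin l → ℝ) → (Fin d → ℝ)))
    (h𝒟m : ∀ D ∈ 𝒟, Measurable D)
    (Dhat : (Fin l → ℝ) → (Fin d → ℝ)) (hDhat : Dhat ∈ 𝒟)
    (Ehat : (Fin d → ℝ) → (Fin l → ℝ)) (hEhat : Ehat ∈ ℰ) :
    ((∀ D ∈ 𝒟, ∀ E ∈ ℰ,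
        ipm (HolderClass (d + l) β 1) (jointXE μ' Ehat) (jointDZ ν Dhat) ≤
          ipm (HolderClass (d + l) β 1) (jointXE μ' E) (jointDZ ν D)) →
      ipm (HolderClass (d + l) β 1) (jointXE μ Ehat) (jointDZ ν Dhat) ≤
        (⨅ DE : 𝒟 × ℰ, ipm (HolderClass (d + l) β 1) (jointXE μ DE.2.1) (jointDZ ν DE.1.1)) +
          2 * ipm {h : (Fin d → ℝ) → ℝ |
              ∃ ψ ∈ HolderClass (d + l) β 1, ∃ E ∈ ℰ, h = fun x => ψ (Fin.append x (E x))}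
            μ' μ) ∧
    ((∀ D ∈ 𝒟, ∀ E ∈ ℰ,
        ipm (HolderClass (d + l) β 1) (jointXE μ' Ehat) (jointDZ ν' Dhat) ≤
          ipm (HolderClass (d + l) β 1) (jointXE μ' E) (jointDZ ν' D)) →
      ipm (HolderClass (d + l) β 1) (jointXE μ Ehat) (jointDZ ν Dhat) ≤
        (⨅ DE : 𝒟 × ℰ, ipm (HolderClass (d + l) β 1) (jointXE μ DE.2.1) (jointDZ ν DE.1.1)) +
          2 * ipm {h : (Fin d → ℝ) → ℝ |
              ∃ ψ ∈ HolderClass (d + l) β 1, ∃ E ∈ ℰ, h = fun x => ψ (Fin.append x (E x))}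
            μ' μ +
          2 * ipm {h : (Fin l → ℝ) → ℝ |
              ∃ ψ ∈ HolderClass (d + l) β 1, ∃ D ∈ 𝒟, h = fun z => ψ (Fin.append (D z) z)}
            ν' ν) := by
  have hΨb : ∀ ψ ∈ HolderClass (d + l) β 1, ∀ y, |ψ y| ≤ 1 :=
    fun _ hψ => abs_le_of_mem_holderClass zero_le_one hψ
  have hΨm : ∀ ψ ∈ HolderClass (d + l) β 1, Measurable ψ :=
    fun _ hψ => hψ.1.continuous.measurable
  refine ⟨fun hmin => ?_, ipm_jointXE_jointDZ_le_iInf_add μ μ' ν ν' hΨb hΨm hℰm h𝒟m hDhat hEhat⟩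
  have h := ipm_jointXE_jointDZ_le_iInf_add μ μ' ν ν hΨb hΨm hℰm h𝒟m hDhat hEhat hmin
  rwa [ipm_self, mul_zero, add_zero] at h

/-- Oracle inequalities for BiGANs, with `Ψ = H^β(ℝ^{d+l}, ℝ, 1)`,
`F₁ = {x ↦ ψ(x, E(x)) : ψ ∈ Ψ, E ∈ ℰ}` and `F₂ = {z ↦ ψ(D(z), z) : ψ ∈ Ψ, D ∈ 𝒟}`. -/
theorem bigan_oracle_inequalities
    (d l : ℕ) (β : ℝ) (hβ : 0 < β)
    (μ μ' : Measure (Fin d → ℝ)) (ν ν' : Measure (Fin l → ℝ))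
    [IsProbabilityMeasure μ] [IsProbabilityMeasure μ']
    [IsProbabilityMeasure ν] [IsProbabilityMeasure ν']
    (hμ : μ (Set.Icc 0 1) = 1) (hμ' : μ' (Set.Icc 0 1) = 1)
    (hν : ν (Set.Icc 0 1) = 1) (hν' : ν' (Set.Icc 0 1) = 1)
    (ℰ : Set ((Fin d → ℝ) → (Fin l → ℝ))) (hℰne : ℰ.Nonempty)
    (hℰm : ∀ E ∈ ℰ, Measurable E)
    (𝒟 : Set ((Fin l → ℝ) → (Fin d → ℝ))) (h𝒟ne : 𝒟.Nonempty)
    (h𝒟m : ∀ D ∈ 𝒟, Measurable D)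
    (Dhat : (Fin l → ℝ) → (Fin d → ℝ)) (hDhat : Dhat ∈ 𝒟)
    (Ehat : (Fin d → ℝ) → (Fin l → ℝ)) (hEhat : Ehat ∈ ℰ) :
    ((∀ D ∈ 𝒟, ∀ E ∈ ℰ,
        ipm (HolderClass (d + l) β 1) (jointXE μ' Ehat) (jointDZ ν Dhat) ≤
          ipm (HolderClass (d + l) β 1) (jointXE μ' E) (jointDZ ν D)) →
      ipm (HolderClass (d + l) β 1) (jointXE μ Ehat) (jointDZ ν Dhat) ≤
        (⨅ DE : 𝒟 × ℰ, ipm (HolderClass (d + l) β 1) (jointXE μ DE.2.1) (jointDZ ν DE.1.1)) +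
          2 * ipm {h : (Fin d → ℝ) → ℝ |
              ∃ ψ ∈ HolderClass (d + l) β 1, ∃ E ∈ ℰ, h = fun x => ψ (Fin.append x (E x))}
            μ' μ) ∧
    ((∀ D ∈ 𝒟, ∀ E ∈ ℰ,
        ipm (HolderClass (d + l) β 1) (jointXE μ' Ehat) (jointDZ ν' Dhat) ≤
          ipm (HolderClass (d + l) β 1) (jointXE μ' E) (jointDZ ν' D)) →
      ipm (HolderClass (d + l) β 1) (jointXE μ Ehat) (jointDZ ν Dhat) ≤
        (⨅ DE : 𝒟 × ℰ, ipm (HolderClass (d + l) β 1) (jointXE μ DE.2.1) (jointDZ ν DE.1.1)) +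
          2 * ipm {h : (Fin d → ℝ) → ℝ |
              ∃ ψ ∈ HolderClass (d + l) β 1, ∃ E ∈ ℰ, h = fun x => ψ (Fin.append x (E x))}
            μ' μ +
          2 * ipm {h : (Fin l → ℝ) → ℝ |
              ∃ ψ ∈ HolderClass (d + l) β 1, ∃ D ∈ 𝒟, h = fun z => ψ (Fin.append (D z) z)}
            ν' ν) :=
  bigan_oracle_inequalities_general d l β μ μ' ν ν' ℰ hℰm 𝒟 h𝒟m Dhat hDhat Ehat hEhat
end

section
/- For every d ∈ ℕ and every real number d⋆ ∈ [0, d], there exists a Borel probability measure μ⋆ on [0,1]^d such that its lower Wasserstein dimension and the upper Minkowski dimension of its support both equal d⋆: d_*(μ⋆) = dim_M(μ⋆) = d⋆. -/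
open Filter Topology MeasureTheory Set
open scoped ENNReal NNReal

open Filter Topology MeasureTheory Set
open scoped ENNReal

/-!
Spread independent fair coin flips over the binary digits of the `d` coordinates, letting
`⌊s (k + 1)⌋ - ⌊s k⌋ ≤ d` coordinates receive a random digit at level `k`, so that `⌊s n⌋`
digits are random among the first `n` levels. The image measure then gives mass `≲ 2^{-⌊s n⌋}`
to every ball of radius `2^{-n}`, so at least `≳ (1 - τ) ε^{-s}` balls of radius `ε` are needed
to capture mass `1 - τ`; on the other hand its support is covered by `2^{⌊s n⌋}` balls of radius
`2^{-n}`. Together with `d_* ≤ dim_M`, which holds because the support is closed and conull,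
this pins both dimensions to `s = d⋆`.
-/

section DimRatio

lemma elog_ofReal {y : ℝ} (hy : 0 < y) : elog (ENNReal.ofReal y) = Real.log y := by
  simp [elog, hy.not_ge, ENNReal.toReal_ofReal hy.le]

lemma elog_mul_inv_log_mono {ε : ℝ} (h0 : 0 < ε) (h1 : ε ≤ 1) :
    Monotone fun x : ℝ≥0∞ => elog x * (((Real.log (1 / ε))⁻¹ : ℝ) : EReal) :=
  fun _ _ h => mul_le_mul_of_nonneg_right (elog_mono h)
    (EReal.coe_nonneg.2 (inv_nonneg.2 (Real.log_nonneg (one_le_one_div h0 h1))))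

lemma dimRatio_mono {ε : ℝ} (h0 : 0 < ε) (h1 : ε ≤ 1) {N M : ℕ∞} (h : N ≤ M) :
    dimRatio N ε ≤ dimRatio M ε :=
  elog_mul_inv_log_mono h0 h1 (ENat.toENNReal_le.2 h)

lemma elog_ofReal_mul_inv_log {ε y : ℝ} (hy : 0 < y) :
    elog (ENNReal.ofReal y) * (((Real.log (1 / ε))⁻¹ : ℝ) : EReal) =
      ((Real.log y / Real.log (1 / ε) : ℝ) : EReal) := by
  rw [elog_ofReal hy, ← EReal.coe_mul, ← div_eq_mul_inv]

lemma le_dimRatio {ε y : ℝ} (h0 : 0 < ε) (h1 : ε ≤ 1) (hy : 0 < y) {N : ℕ∞}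
    (h : ENNReal.ofReal y ≤ N) :
    ((Real.log y / Real.log (1 / ε) : ℝ) : EReal) ≤ dimRatio N ε := by
  rw [← elog_ofReal_mul_inv_log hy]
  exact elog_mul_inv_log_mono h0 h1 h

lemma dimRatio_le {ε y : ℝ} (h0 : 0 < ε) (h1 : ε ≤ 1) (hy : 0 < y) {N : ℕ∞}
    (h : (N : ℝ≥0∞) ≤ ENNReal.ofReal y) :
    dimRatio N ε ≤ ((Real.log y / Real.log (1 / ε) : ℝ) : EReal) := by
  rw [← elog_ofReal_mul_inv_log hy]
  exact elog_mul_inv_log_mono h0 h1 h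

lemma tendsto_log_mul_rpow_div_log {C : ℝ} (hC : 0 < C) (s : ℝ) :
    Tendsto (fun ε : ℝ => ((Real.log (C * ε ^ (-s)) / Real.log (1 / ε) : ℝ) : EReal))
      (𝓝[>] 0) (𝓝 s) := by
  rw [EReal.tendsto_coe]
  have hL : Tendsto (fun ε : ℝ => Real.log (1 / ε)) (𝓝[>] 0) atTop := by
    refine (tendsto_neg_atBot_atTop.comp Real.tendsto_log_nhdsGT_zero).congr fun ε => ?_
    simp [one_div, Real.log_inv]
  have hlim : Tendsto (fun ε => s + Real.log C / Real.log (1 / ε)) (𝓝[>] 0) (𝓝 s) := by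
    simpa using tendsto_const_nhds.add (tendsto_const_nhds.div_atTop hL)
  refine hlim.congr' ?_
  filter_upwards [hL.eventually_gt_atTop 0, self_mem_nhdsWithin] with ε hLε (hε : 0 < ε)
  rw [Real.log_mul hC.ne' (Real.rpow_pos_of_pos hε _).ne', Real.log_rpow hε]
  rw [one_div, Real.log_inv] at hLε ⊢
  have hne : Real.log ε ≠ 0 := by linarith
  field_simp
  ring

end DimRatio

section Covering

variable {X : Type*} [PseudoMetricSpace X]

lemma coverN_le_card {ε : ℝ} {S : Set X} (t : Finset X)
    (h : S ⊆ ⋃ x ∈ t, Metric.closedBall x ε) : coverN ε S ≤ t.card :=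
  iInf₂_le t h

lemma coverN_anti {ε ε' : ℝ} (hε : ε ≤ ε') (S : Set X) : coverN ε' S ≤ coverN ε S :=
  le_iInf₂ fun t ht => coverN_le_card t
    (ht.trans (iUnion₂_mono fun _ _ => Metric.closedBall_subset_closedBall hε))

variable [MeasurableSpace X]

lemma measCoverN_le_coverN {μ : Measure X} {ε τ : ℝ} {S : Set X} (hS : MeasurableSet S)
    (hμS : ENNReal.ofReal (1 - τ) ≤ μ S) : measCoverN μ ε τ ≤ coverN ε S :=
  iInf_le_of_le S (iInf_le_of_le hS (iInf_le _ hμS))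

lemma ofReal_div_le_measCoverN {μ : Measure X} {ε τ : ℝ} {m : ℝ≥0∞}
    (hm : ∀ x, μ (Metric.closedBall x ε) ≤ m) :
    ENNReal.ofReal (1 - τ) / m ≤ measCoverN μ ε τ := by
  simp only [measCoverN, coverN, ENat.toENNReal_iInf]
  refine le_iInf₂ fun S _ => le_iInf fun hμS => le_iInf₂ fun t ht =>
    ENNReal.div_le_of_le_mul ?_
  calc ENNReal.ofReal (1 - τ) ≤ μ S := hμS
    _ ≤ ∑ x ∈ t, μ (Metric.closedBall x ε) :=
        (measure_mono ht).trans (measure_biUnion_finset_le _ _)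
    _ ≤ ∑ _x ∈ t, m := Finset.sum_le_sum fun x _ => hm x
    _ = ((t.card : ℕ∞) : ℝ≥0∞) * m := by simp

lemma msupport_eq_support (μ : Measure X) : msupport μ = μ.support :=
  Set.ext fun _ => Metric.nhds_basis_ball.mem_measureSupport.symm

theorem lowerWDim_le_minkowskiDim [OpensMeasurableSpace X] [SecondCountableTopology X]
    (μ : Measure X) [IsProbabilityMeasure μ] : lowerWDim μ ≤ minkowskiDim μ := by
  have hmeas : MeasurableSet (msupport μ) :=
    msupport_eq_support μ ▸ Measure.isClosed_support.measurableSet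
  have hfull : μ (msupport μ) = 1 :=
    (prob_compl_eq_zero_iff hmeas).1 (msupport_eq_support μ ▸ Measure.measure_compl_support)
  refine limsup_le_of_le (by isBoundedDefault) ?_
  filter_upwards [self_mem_nhdsWithin] with τ (hτ : 0 < τ)
  refine (liminf_le_liminf ?_).trans liminf_le_limsup
  filter_upwards [Ioc_mem_nhdsGT one_pos] with ε hε
  refine dimRatio_mono hε.1 hε.2 (measCoverN_le_coverN hmeas ?_)
  rw [hfull]
  exact ENNReal.ofReal_le_one.2 (by linarith)

theorem le_lowerWDim_of_measure_closedBall_le {μ : Measure X} {s C : ℝ} (hC : 0 < C)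
    (h : ∀ᶠ ε in 𝓝[>] 0, ∀ x, μ (Metric.closedBall x ε) ≤ ENNReal.ofReal (C * ε ^ s)) :
    (s : EReal) ≤ lowerWDim μ := by
  refine le_limsup_of_frequently_le (Eventually.frequently ?_) (by isBoundedDefault)
  filter_upwards [Ioo_mem_nhdsGT one_pos] with τ hτ
  rw [← (tendsto_log_mul_rpow_div_log (div_pos (sub_pos.2 hτ.2) hC) s).liminf_eq]
  refine liminf_le_liminf ?_
  filter_upwards [h, Ioc_mem_nhdsGT one_pos] with ε hball hε
  refine le_dimRatio hε.1 hε.2 (by have := hε.1; have := sub_pos.2 hτ.2; positivity) ?_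
  calc ENNReal.ofReal ((1 - τ) / C * ε ^ (-s))
      = ENNReal.ofReal (1 - τ) / ENNReal.ofReal (C * ε ^ s) := by
        rw [← ENNReal.ofReal_div_of_pos (by have := hε.1; positivity), Real.rpow_neg hε.1.le]
        congr 1
        field_simp
    _ ≤ measCoverN μ ε τ := ofReal_div_le_measCoverN hball

theorem minkowskiDim_le_of_coverN_le {μ : Measure X} {s C : ℝ} (hC : 0 < C)
    (h : ∀ᶠ ε in 𝓝[>] 0, (coverN ε (msupport μ) : ℝ≥0∞) ≤ ENNReal.ofReal (C * ε ^ (-s))) :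
    minkowskiDim μ ≤ s := by
  rw [← (tendsto_log_mul_rpow_div_log hC s).limsup_eq]
  refine limsup_le_limsup ?_
  filter_upwards [h, Ioc_mem_nhdsGT one_pos] with ε hcov hε
  exact dimRatio_le hε.1 hε.2 (by have := hε.1; positivity) hcov

end Covering

section Binary

def binNumer (b : ℕ → Bool) : ℕ → ℕ
  | 0 => 0
  | n + 1 => 2 * binNumer b n + (b n).toNat

noncomputable def binSum (b : ℕ → Bool) : ℝ := ∑' k, (b k).toNat * (2⁻¹ : ℝ) ^ (k + 1)

lemma binNumer_congr {b b' : ℕ → Bool} {n : ℕ} (h : ∀ k < n, b k = b' k) :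
    binNumer b n = binNumer b' n := by
  induction n with
  | zero => rfl
  | succ n ih =>
    simp only [binNumer, ih fun k hk => h k (by omega), h n n.lt_succ_self]

lemma eq_of_binNumer_eq {b b' : ℕ → Bool} {n : ℕ} (h : binNumer b n = binNumer b' n) :
    ∀ k < n, b k = b' k := by
  induction n with
  | zero => intro k hk; omega
  | succ n ih =>
    have hb := Bool.toNat_le (b n)
    have hb' := Bool.toNat_le (b' n)
    simp only [binNumer] at h
    intro k hk
    rcases Nat.lt_succ_iff_lt_or_eq.1 hk with hk | rfl
    · exact ih (by omega) k hk
    · have : (b k).toNat = (b' k).toNat := by omega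
      revert this
      cases b k <;> cases b' k <;> simp

lemma binNumer_mul_eq_sum (b : ℕ → Bool) (n : ℕ) :
    binNumer b n * (2⁻¹ : ℝ) ^ n =
      ∑ k ∈ Finset.range n, (b k).toNat * (2⁻¹ : ℝ) ^ (k + 1) := by
  induction n with
  | zero => simp [binNumer]
  | succ n ih =>
    rw [Finset.sum_range_succ, ← ih, binNumer]
    push_cast
    ring

lemma binSum_term_le (b : ℕ → Bool) (k : ℕ) :
    (b k).toNat * (2⁻¹ : ℝ) ^ (k + 1) ≤ (2⁻¹ : ℝ) ^ (k + 1) :=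
  mul_le_of_le_one_left (by positivity) (by exact_mod_cast Bool.toNat_le (b k))

lemma summable_inv_two_pow_succ : Summable fun k : ℕ => (2⁻¹ : ℝ) ^ (k + 1) := by
  simpa [pow_succ] using summable_geometric_two.mul_right (2⁻¹ : ℝ)

lemma summable_binSum_term (b : ℕ → Bool) :
    Summable fun k => (b k).toNat * (2⁻¹ : ℝ) ^ (k + 1) :=
  summable_inv_two_pow_succ.of_nonneg_of_le (fun _ => by positivity) (binSum_term_le b)

lemma binSum_mem_Icc (b : ℕ → Bool) (n : ℕ) :
    binSum b ∈
      Icc (binNumer b n * (2⁻¹ : ℝ) ^ n) (binNumer b n * (2⁻¹ : ℝ) ^ n + 2⁻¹ ^ n) := by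
  have htail : ∑' k, (b (k + n)).toNat * (2⁻¹ : ℝ) ^ (k + n + 1) ≤ 2⁻¹ ^ n := by
    calc ∑' k, (b (k + n)).toNat * (2⁻¹ : ℝ) ^ (k + n + 1)
        ≤ ∑' k, (2⁻¹ : ℝ) ^ (k + n + 1) :=
          ((summable_binSum_term b).comp_injective (add_left_injective n)).tsum_le_tsum
            (fun k => binSum_term_le b (k + n))
            (summable_inv_two_pow_succ.comp_injective (add_left_injective n))
      _ = 2⁻¹ ^ n := by
        simp only [pow_add, tsum_mul_right, tsum_geometric_inv_two]
        ring
  rw [binSum, ← (summable_binSum_term b).sum_add_tsum_nat_add n, ← binNumer_mul_eq_sum]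
  exact ⟨le_add_of_nonneg_right (tsum_nonneg fun _ => by positivity), by linarith⟩

lemma continuous_binSum : Continuous binSum :=
  continuous_tsum (fun k => (continuous_of_discreteTopology
      (f := fun x : Bool => (x.toNat : ℝ) * (2⁻¹ : ℝ) ^ (k + 1))).comp (continuous_apply k))
    summable_inv_two_pow_succ fun k b => by
      rw [Real.norm_of_nonneg (by positivity)]
      exact binSum_term_le b k

end Binary

section DyadicScale

variable {s ε : ℝ}

lemma two_pow_floor_le_rpow_neg (hs : 0 ≤ s) (hε : 0 < ε) {n : ℕ}
    (hn : ε ≤ (2⁻¹ : ℝ) ^ n) :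
    (2 : ℝ) ^ ⌊s * (n + 1 : ℕ)⌋₊ ≤ 2 ^ s * ε ^ (-s) := by
  have hn' : (2 : ℝ) ^ n ≤ ε⁻¹ := (le_inv_comm₀ hε (by positivity)).1 (by rwa [inv_pow] at hn)
  calc (2 : ℝ) ^ ⌊s * (n + 1 : ℕ)⌋₊ = 2 ^ (⌊s * (n + 1 : ℕ)⌋₊ : ℝ) :=
        (Real.rpow_natCast 2 _).symm
    _ ≤ 2 ^ (s * (n + 1 : ℕ)) :=
        Real.rpow_le_rpow_of_exponent_le one_le_two (Nat.floor_le (by positivity))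
    _ = 2 ^ s * ((2 : ℝ) ^ n) ^ s := by
        rw [← Real.rpow_natCast, ← Real.rpow_mul zero_le_two, ← Real.rpow_add two_pos]
        push_cast
        ring_nf
    _ ≤ 2 ^ s * ε⁻¹ ^ s := by gcongr
    _ = 2 ^ s * ε ^ (-s) := by rw [Real.rpow_neg hε.le, Real.inv_rpow hε.le]

lemma inv_two_pow_floor_le_rpow (hs : 0 ≤ s) {n : ℕ} (hn : (2⁻¹ : ℝ) ^ (n + 1) < ε) :
    (2⁻¹ : ℝ) ^ ⌊s * n⌋₊ ≤ 2 * 2 ^ s * ε ^ s := by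
  have hε : 0 < ε := (by positivity : (0 : ℝ) < 2⁻¹ ^ (n + 1)).trans hn
  have hfloor : s * n < ⌊s * n⌋₊ + 1 := Nat.lt_floor_add_one _
  calc (2⁻¹ : ℝ) ^ ⌊s * n⌋₊ = (2 ^ (⌊s * n⌋₊ : ℝ))⁻¹ := by rw [Real.rpow_natCast, inv_pow]
    _ ≤ (2 ^ (s * n - 1))⁻¹ :=
        inv_anti₀ (by positivity) (Real.rpow_le_rpow_of_exponent_le one_le_two (by linarith))
    _ = 2 * ((2⁻¹ : ℝ) ^ n) ^ s := by
        rw [Real.rpow_sub two_pos, Real.rpow_one, inv_div, inv_pow,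
          Real.inv_rpow (by positivity), ← Real.rpow_natCast, ← Real.rpow_mul zero_le_two,
          mul_comm (n : ℝ), div_eq_mul_inv]
    _ ≤ 2 * (2 * ε) ^ s := by
        gcongr
        rw [pow_succ] at hn
        linarith
    _ = 2 * 2 ^ s * ε ^ s := by rw [Real.mul_rpow zero_le_two hε.le, mul_assoc]

lemma sub_floor_div_mem_Icc {N : ℤ} {q y : ℝ} (hq : 0 < q) (h : |N * q - y| ≤ 2 * q) :
    N - ⌊y / q⌋ ∈ Finset.Icc (-2 : ℤ) 2 := by
  have h' : |(N : ℝ) - y / q| ≤ 2 := by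
    have he : (N : ℝ) - y / q = (N * q - y) / q := by field_simp
    rwa [he, abs_div, abs_of_pos hq, div_le_iff₀ hq]
  rw [abs_le] at h'
  have h1 := Int.floor_le (y / q)
  have h2 := Int.lt_floor_add_one (y / q)
  have h3 : N - ⌊y / q⌋ < 3 := by
    have : ((N - ⌊y / q⌋ : ℤ) : ℝ) < 3 := by push_cast; linarith
    exact_mod_cast this
  have h4 : -2 ≤ N - ⌊y / q⌋ := by
    have : (-2 : ℝ) ≤ ((N - ⌊y / q⌋ : ℤ) : ℝ) := by push_cast; linarith
    exact_mod_cast this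
  rw [Finset.mem_Icc]
  omega

end DyadicScale

section CoinFlips

variable (ι : Type*)

noncomputable def coinFlips : Measure (ι → Bool) :=
  Measure.infinitePi fun _ => (PMF.uniformOfFintype Bool).toMeasure

instance : IsProbabilityMeasure (coinFlips ι) := by
  unfold coinFlips
  infer_instance

variable {ι}

lemma coinFlips_pi_singleton (s : Finset ι) (ω : ι → Bool) :
    coinFlips ι (Set.pi s fun p => {ω p}) = 2⁻¹ ^ s.card := by
  rw [coinFlips, Measure.infinitePi_pi _ fun _ _ => measurableSet_singleton _]
  simp

end CoinFlips

section CantorMeasure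

variable {d : ℕ} (A : Set (ℕ × Fin d)) [DecidablePred (· ∈ A)]

/-- Index `(k, i)` stands for the `(k + 1)`-st binary digit of the `i`-th coordinate; only the
digits indexed by `A` are kept. -/
def gate (ω : ℕ × Fin d → Bool) (p : ℕ × Fin d) : Bool := decide (p ∈ A) && ω p

noncomputable def cantorMap (ω : ℕ × Fin d → Bool) : Fin d → ℝ :=
  fun i => binSum fun k => gate A ω (k, i)

def dyadicNumer (n : ℕ) (ω : ℕ × Fin d → Bool) : Fin d → ℕ :=
  fun i => binNumer (fun k => gate A ω (k, i)) n

noncomputable def cantorMeasure : Measure (Fin d → ℝ) := (coinFlips _).map (cantorMap A)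

noncomputable def dyadicApprox (n : ℕ) (ω : ℕ × Fin d → Bool) : Fin d → ℝ :=
  fun i => dyadicNumer A n ω i * 2⁻¹ ^ n

def activeBelow (n : ℕ) : Finset (ℕ × Fin d) :=
  (Finset.range n ×ˢ Finset.univ).filter (· ∈ A)

lemma cantorMap_mem_Icc (ω : ℕ × Fin d → Bool) : cantorMap A ω ∈ Icc 0 1 := by
  have h i := binSum_mem_Icc (fun k => gate A ω (k, i)) 0
  simp only [binNumer, Nat.cast_zero, zero_mul, pow_zero, zero_add] at h
  exact ⟨fun i => (h i).1, fun i => (h i).2⟩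

lemma continuous_cantorMap : Continuous (cantorMap A) :=
  continuous_pi fun i => continuous_binSum.comp <| continuous_pi fun k =>
    (continuous_of_discreteTopology (f := fun b : Bool => decide ((k, i) ∈ A) && b)).comp
      (continuous_apply (k, i))

lemma measurable_cantorMap : Measurable (cantorMap A) := (continuous_cantorMap A).measurable

instance : IsProbabilityMeasure (cantorMeasure A) :=
  Measure.isProbabilityMeasure_map (measurable_cantorMap A).aemeasurable

lemma cantorMeasure_Icc : cantorMeasure A (Icc 0 1) = 1 := by
  have hpre : cantorMap A ⁻¹' Icc 0 1 = univ := Set.eq_univ_of_forall (cantorMap_mem_Icc A)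
  rw [cantorMeasure, Measure.map_apply (measurable_cantorMap A) measurableSet_Icc, hpre,
    measure_univ]

lemma dist_cantorMap_dyadicApprox_le (n : ℕ) (ω : ℕ × Fin d → Bool) :
    dist (cantorMap A ω) (dyadicApprox A n ω) ≤ 2⁻¹ ^ n := by
  refine (dist_pi_le_iff (by positivity)).2 fun i => ?_
  have hbin := binSum_mem_Icc (fun k => gate A ω (k, i)) n
  rw [Real.dist_eq, abs_le]
  simp only [dyadicApprox, dyadicNumer, cantorMap]
  constructor <;> linarith [hbin.1, hbin.2]

lemma eq_of_dyadicNumer_eq {n : ℕ} {ω ω' : ℕ × Fin d → Bool}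
    (h : dyadicNumer A n ω = dyadicNumer A n ω') : ∀ p ∈ activeBelow A n, ω p = ω' p := by
  rintro ⟨k, i⟩ hp
  simp only [activeBelow, Finset.mem_filter, Finset.mem_product, Finset.mem_range] at hp
  have := eq_of_binNumer_eq (congrFun h i) k hp.1.1
  simpa [gate, hp.2] using this

lemma coinFlips_dyadicNumer_eq_le (n : ℕ) (ω₀ : ℕ × Fin d → Bool) :
    coinFlips _ {ω | dyadicNumer A n ω = dyadicNumer A n ω₀} ≤
      2⁻¹ ^ (activeBelow A n).card := by
  rw [← coinFlips_pi_singleton (activeBelow A n) ω₀]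
  exact measure_mono fun ω hω p hp => eq_of_dyadicNumer_eq A hω p hp

lemma cantorMeasure_closedBall_le {n : ℕ} {ε : ℝ} (hε : ε ≤ 2⁻¹ ^ n) (x : Fin d → ℝ) :
    cantorMeasure A (Metric.closedBall x ε) ≤ 5 ^ d * 2⁻¹ ^ (activeBelow A n).card := by
  set c : Fin d → ℤ := fun i => ⌊x i / 2⁻¹ ^ n⌋
  set Z := Fintype.piFinset fun _ : Fin d => Finset.Icc (-2 : ℤ) 2
  have hsub : cantorMap A ⁻¹' Metric.closedBall x ε ⊆
      ⋃ z ∈ Z, {ω | ∀ i, (dyadicNumer A n ω i : ℤ) = c i + z i} := by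
    intro ω hω
    refine mem_iUnion₂.2 ⟨fun i => (dyadicNumer A n ω i : ℤ) - c i, ?_, fun i => by ring⟩
    refine Fintype.mem_piFinset.2 fun i => sub_floor_div_mem_Icc (by positivity) ?_
    calc |(dyadicNumer A n ω i : ℤ) * (2⁻¹ : ℝ) ^ n - x i|
        = dist (dyadicApprox A n ω i) (x i) := by simp [dyadicApprox, Real.dist_eq]
      _ ≤ dist (dyadicApprox A n ω) x := dist_le_pi_dist _ _ i
      _ ≤ dist (cantorMap A ω) (dyadicApprox A n ω) + dist (cantorMap A ω) x :=
          dist_triangle_left _ _ _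
      _ ≤ 2 * 2⁻¹ ^ n := by
          linarith [dist_cantorMap_dyadicApprox_le A n ω, (Metric.mem_closedBall.1 hω).trans hε]
  have hfiber : ∀ z : Fin d → ℤ,
      coinFlips _ {ω | ∀ i, (dyadicNumer A n ω i : ℤ) = c i + z i} ≤
        2⁻¹ ^ (activeBelow A n).card := by
    intro z
    rcases Set.eq_empty_or_nonempty {ω | ∀ i, (dyadicNumer A n ω i : ℤ) = c i + z i}
      with hempty | ⟨ω₀, hω₀⟩
    · simp [hempty]
    refine (measure_mono fun ω hω => ?_).trans (coinFlips_dyadicNumer_eq_le A n ω₀)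
    exact funext fun i => by exact_mod_cast (hω i).trans (hω₀ i).symm
  rw [cantorMeasure,
    Measure.map_apply (measurable_cantorMap A) Metric.isClosed_closedBall.measurableSet]
  calc coinFlips _ (cantorMap A ⁻¹' Metric.closedBall x ε)
      ≤ ∑ z ∈ Z, coinFlips _ {ω | ∀ i, (dyadicNumer A n ω i : ℤ) = c i + z i} :=
        (measure_mono hsub).trans (measure_biUnion_finset_le _ _)
    _ ≤ ∑ _z ∈ Z, (2⁻¹ : ℝ≥0∞) ^ (activeBelow A n).card :=
        Finset.sum_le_sum fun z _ => hfiber z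
    _ = 5 ^ d * 2⁻¹ ^ (activeBelow A n).card := by simp [Z]

lemma coverN_msupport_cantorMeasure_le (n : ℕ) :
    coverN ((2⁻¹ : ℝ) ^ n) (msupport (cantorMeasure A)) ≤ 2 ^ (activeBelow A n).card := by
  classical
  let extend (v : activeBelow A n → Bool) (p : ℕ × Fin d) : Bool :=
    if h : p ∈ activeBelow A n then v ⟨p, h⟩ else false
  let centers := Finset.univ.image fun v => dyadicApprox A n (extend v)
  have hrange : ∀ ω, cantorMap A ω ∈ ⋃ c ∈ centers, Metric.closedBall c (2⁻¹ ^ n) := by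
    intro ω
    have happrox : dyadicApprox A n (extend fun p => ω p) = dyadicApprox A n ω := by
      refine funext fun i => congrArg (fun N : ℕ => (N : ℝ) * 2⁻¹ ^ n) ?_
      refine binNumer_congr fun k hk => ?_
      by_cases hA : (k, i) ∈ A
      · have hp : (k, i) ∈ activeBelow A n := by simp [activeBelow, hk, hA]
        simp [gate, extend, hp]
      · simp [gate, hA]
    refine mem_iUnion₂.2
      ⟨_, Finset.mem_image_of_mem _ (Finset.mem_univ fun p : activeBelow A n => ω p), ?_⟩
    rw [happrox]
    exact dist_cantorMap_dyadicApprox_le A n ω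
  have hclosed : IsClosed (⋃ c ∈ centers, Metric.closedBall c ((2⁻¹ : ℝ) ^ n)) :=
    centers.finite_toSet.isClosed_biUnion fun _ _ => Metric.isClosed_closedBall
  have hsupp : msupport (cantorMeasure A) ⊆ ⋃ c ∈ centers, Metric.closedBall c (2⁻¹ ^ n) := by
    rw [msupport_eq_support]
    refine Measure.support_subset_of_isClosed hclosed ?_
    rw [mem_ae_iff, cantorMeasure,
      Measure.map_apply (measurable_cantorMap A) hclosed.isOpen_compl.measurableSet]
    have hpre : cantorMap A ⁻¹' ⋃ c ∈ centers, Metric.closedBall c (2⁻¹ ^ n) = univ :=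
      Set.eq_univ_iff_forall.2 hrange
    rw [Set.preimage_compl, hpre, compl_univ, measure_empty]
  calc coverN _ _ ≤ centers.card := coverN_le_card centers hsupp
    _ ≤ 2 ^ (activeBelow A n).card := by
        exact_mod_cast Finset.card_image_le.trans (by simp)

end CantorMeasure

section Schedule

def digitSchedule (d : ℕ) (s : ℝ) : Set (ℕ × Fin d) :=
  {p | (p.2 : ℕ) < ⌊s * (p.1 + 1)⌋₊ - ⌊s * p.1⌋₊}

noncomputable instance (d : ℕ) (s : ℝ) : DecidablePred (· ∈ digitSchedule d s) :=
  fun p => inferInstanceAs (Decidable ((p.2 : ℕ) < _))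

variable {d : ℕ} {s : ℝ}

lemma floor_mul_succ_sub_floor_le (hs : 0 ≤ s) (hsd : s ≤ d) (k : ℕ) :
    ⌊s * (k + 1)⌋₊ - ⌊s * k⌋₊ ≤ d := by
  have : ⌊s * (k + 1)⌋₊ ≤ ⌊s * k⌋₊ + d := by
    rw [← Nat.floor_add_natCast (by positivity)]
    exact Nat.floor_mono (by nlinarith)
  omega

lemma card_activeBelow_digitSchedule (hs : 0 ≤ s) (hsd : s ≤ d) (n : ℕ) :
    (activeBelow (digitSchedule d s) n).card = ⌊s * n⌋₊ := by
  rw [activeBelow, Finset.card_filter, Finset.sum_product]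
  have hrow : ∀ k, ∑ i : Fin d, (if (k, i) ∈ digitSchedule d s then 1 else 0) =
      ⌊s * ((k : ℕ) + 1 : ℕ)⌋₊ - ⌊s * (k : ℕ)⌋₊ := by
    intro k
    rw [← Finset.card_filter]
    push_cast
    convert Fin.card_filter_val_lt.trans (min_eq_right (floor_mul_succ_sub_floor_le hs hsd k))
    rfl
  simp only [hrow]
  rw [Finset.sum_range_tsub (f := fun k : ℕ => ⌊s * k⌋₊)]
  · simp
  · exact fun a b hab => Nat.floor_mono (by gcongr)

end Schedule

section DigitScheduleBounds

variable {d : ℕ} {s ε : ℝ}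

lemma cantorMeasure_digitSchedule_closedBall_le (hs : 0 ≤ s) (hsd : s ≤ d) (hε0 : 0 < ε)
    (hε1 : ε ≤ 1) (x : Fin d → ℝ) :
    cantorMeasure (digitSchedule d s) (Metric.closedBall x ε) ≤
      ENNReal.ofReal (5 ^ d * 2 * 2 ^ s * ε ^ s) := by
  obtain ⟨n, hn, hεn⟩ := exists_nat_pow_near_of_lt_one hε0 hε1 (by norm_num : (0 : ℝ) < 2⁻¹)
    (by norm_num)
  have hreal := mul_le_mul_of_nonneg_left (inv_two_pow_floor_le_rpow hs hn)
    (by positivity : (0 : ℝ) ≤ 5 ^ d)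
  calc cantorMeasure (digitSchedule d s) (Metric.closedBall x ε)
      ≤ 5 ^ d * 2⁻¹ ^ ⌊s * n⌋₊ := by
        simpa only [card_activeBelow_digitSchedule hs hsd] using
          cantorMeasure_closedBall_le (digitSchedule d s) hεn x
    _ = ENNReal.ofReal (5 ^ d * 2⁻¹ ^ ⌊s * n⌋₊) := by
        simp [ENNReal.ofReal_mul, ENNReal.ofReal_pow, ENNReal.ofReal_inv_of_pos,
          ENNReal.inv_pow]
    _ ≤ ENNReal.ofReal (5 ^ d * 2 * 2 ^ s * ε ^ s) := ENNReal.ofReal_le_ofReal (by linarith)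

lemma coverN_msupport_digitSchedule_le (hs : 0 ≤ s) (hsd : s ≤ d) (hε0 : 0 < ε)
    (hε1 : ε ≤ 1) :
    (coverN ε (msupport (cantorMeasure (digitSchedule d s))) : ℝ≥0∞) ≤
      ENNReal.ofReal (2 ^ s * ε ^ (-s)) := by
  obtain ⟨n, hn, hεn⟩ := exists_nat_pow_near_of_lt_one hε0 hε1 (by norm_num : (0 : ℝ) < 2⁻¹)
    (by norm_num)
  have hcover := (coverN_anti hn.le _).trans
    (coverN_msupport_cantorMeasure_le (digitSchedule d s) (n + 1))
  rw [card_activeBelow_digitSchedule hs hsd] at hcover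
  calc (coverN ε (msupport (cantorMeasure (digitSchedule d s))) : ℝ≥0∞)
      ≤ ((2 ^ ⌊s * (n + 1 : ℕ)⌋₊ : ℕ∞) : ℝ≥0∞) := by exact_mod_cast hcover
    _ = ENNReal.ofReal (2 ^ ⌊s * (n + 1 : ℕ)⌋₊) := by simp [ENNReal.ofReal_pow]
    _ ≤ ENNReal.ofReal (2 ^ s * ε ^ (-s)) :=
        ENNReal.ofReal_le_ofReal (two_pow_floor_le_rpow_neg hs hε0 hεn)

end DigitScheduleBounds

/-- For every `d ∈ ℕ` and every real `d⋆ ∈ [0, d]` there exists a Borel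
probability measure `μ⋆` on `[0,1]^d` with `d_*(μ⋆) = dim_M(μ⋆) = d⋆`. -/
theorem exists_measure_lowerWDim_eq_minkowskiDim
    (d : ℕ) (dstar : ℝ) (h0 : 0 ≤ dstar) (hd : dstar ≤ (d : ℝ)) :
    ∃ μ : Measure (Fin d → ℝ), IsProbabilityMeasure μ ∧ μ (Set.Icc 0 1) = 1 ∧
      lowerWDim μ = (dstar : EReal) ∧ minkowskiDim μ = (dstar : EReal) := by
  set μ := cantorMeasure (digitSchedule d dstar)
  have hlower : (dstar : EReal) ≤ lowerWDim μ :=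
    le_lowerWDim_of_measure_closedBall_le (C := 5 ^ d * 2 * 2 ^ dstar) (by positivity) <| by
      filter_upwards [Ioc_mem_nhdsGT one_pos] with ε hε
      exact cantorMeasure_digitSchedule_closedBall_le h0 hd hε.1 hε.2
  have hupper : minkowskiDim μ ≤ dstar :=
    minkowskiDim_le_of_coverN_le (C := 2 ^ dstar) (by positivity) <| by
      filter_upwards [Ioc_mem_nhdsGT one_pos] with ε hε
      exact coverN_msupport_digitSchedule_le h0 hd hε.1 hε.2
  have hmid := lowerWDim_le_minkowskiDim μ
  exact ⟨μ, inferInstance, cantorMeasure_Icc _, le_antisymm (hmid.trans hupper) hlower,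
    le_antisymm hupper (hlower.trans hmid)⟩
end

section
/- Let μ be a Borel probability measure on a measurable space, let X_1, …, X_n be i.i.d. with law μ, and let μ_n = n^{-1} Σ_{i=1}^n δ_{X_i} be the empirical measure. If A_1, …, A_m are pairwise disjoint measurable sets whose union is a measurable set T, then E[ Σ_{j=1}^m |μ_n(A_j) − μ(A_j)| ] ≤ √( m · μ(T) / n ). -/
/-! For a single set `A`, `n · μ_n(A)` is a sum of `n` independent indicators of mean `μ(A)`,
so `μ_n(A)` has mean `μ(A)` and variance at most `μ(A) / n`; Cauchy–Schwarz in `L²` gives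
`E|μ_n(A) − μ(A)| ≤ √(μ(A) / n)`. Summing over the cells and applying Cauchy–Schwarz in `ℝᵐ`,
`Σⱼ √(μ(Aⱼ) / n) ≤ √(m · Σⱼ μ(Aⱼ) / n) = √(m · μ(T) / n)`. -/

open Filter Topology MeasureTheory Set
open scoped ENNReal NNReal

open Filter Topology MeasureTheory Set Function
open scoped ENNReal

lemma Real.sum_sqrt_le_sqrt_card_mul_sum {ι : Type*} (s : Finset ι) {f : ι → ℝ}
    (hf : ∀ i, 0 ≤ f i) : ∑ i ∈ s, √(f i) ≤ √(s.card * ∑ i ∈ s, f i) := by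
  simpa [Real.sqrt_mul'] using
    Real.sum_sqrt_mul_sqrt_le s (f := 1) (fun _ => zero_le_one) hf

namespace ProbabilityTheory

variable {Ω : Type*} [MeasurableSpace Ω]

lemma integral_abs_sub_integral_le_sqrt_variance {μ : Measure Ω} [IsProbabilityMeasure μ]
    {X : Ω → ℝ} (hX : MemLp X 2 μ) :
    ∫ ω, |X ω - μ[X]| ∂μ ≤ √Var[X; μ] := by
  set Y : Ω → ℝ := fun ω => |X ω - μ[X]|
  have hY : MemLp Y 2 μ := (hX.sub (memLp_const _)).abs
  have hY_sq : μ[Y ^ 2] = Var[X; μ] := by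
    simp only [Y, Pi.pow_apply, sq_abs, variance_eq_integral hX.aemeasurable]
  have hY_mean_sq : μ[Y] ^ 2 ≤ Var[X; μ] := by
    rw [← hY_sq]
    exact sub_nonneg.mp ((variance_eq_sub hY).symm ▸ variance_nonneg Y μ)
  exact Real.le_sqrt_of_sq_le hY_mean_sq

lemma variance_indicator_one_le (μ : Measure Ω) [IsProbabilityMeasure μ] {A : Set Ω}
    (hA : MeasurableSet A) : Var[A.indicator 1; μ] ≤ μ.real A := by
  have hsq : A.indicator (1 : Ω → ℝ) ^ 2 = A.indicator 1 := by
    ext ω; by_cases h : ω ∈ A <;> simp [h]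
  calc Var[A.indicator 1; μ] ≤ μ[A.indicator (1 : Ω → ℝ) ^ 2] :=
        variance_le_expectation_sq (by fun_prop (disch := exact hA))
    _ = μ.real A := by rw [hsq]; exact integral_indicator_one hA

end ProbabilityTheory

open ProbabilityTheory

section EmpiricalMeasure

variable {Ω : Type*} [MeasurableSpace Ω] {n : ℕ} {A : Set Ω}

lemma empMeas_apply_toReal (x : Fin n → Ω) (hA : MeasurableSet A) :
    (empMeas x A).toReal = (n : ℝ)⁻¹ * ∑ i, A.indicator 1 (x i) := by
  simp only [empMeas, Measure.smul_apply, Measure.coe_finsetSum, Finset.sum_apply, smul_eq_mul,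
    ENNReal.toReal_mul, ENNReal.toReal_inv, ENNReal.toReal_natCast]
  rw [ENNReal.toReal_sum fun i _ => measure_ne_top (Measure.dirac (x i)) A]
  congr 2 with i
  by_cases h : x i ∈ A <;> simp [Measure.dirac_apply' _ hA, h]

variable (μ : Measure Ω) [IsProbabilityMeasure μ]

lemma memLp_indicator_one (hA : MeasurableSet A) (p : ℝ≥0∞) :
    MemLp (A.indicator (1 : Ω → ℝ)) p μ :=
  memLp_indicator_const p hA 1 (.inr (measure_ne_top μ A))

lemma memLp_empMeas_apply_toReal (hA : MeasurableSet A) (p : ℝ≥0∞) :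
    MemLp (fun x => (empMeas x A).toReal) p (Measure.pi fun _ : Fin n => μ) := by
  have hsum : MemLp (fun x : Fin n → Ω => ∑ i, A.indicator 1 (x i)) p
      (Measure.pi fun _ : Fin n => μ) :=
    memLp_finsetSum _ fun i _ =>
      (memLp_indicator_one μ hA p).comp_measurePreserving (measurePreserving_eval _ i)
  simpa only [empMeas_apply_toReal _ hA] using hsum.const_mul (n : ℝ)⁻¹

lemma integral_empMeas_apply_toReal (hn : n ≠ 0) (hA : MeasurableSet A) :
    ∫ x, (empMeas x A).toReal ∂(Measure.pi fun _ : Fin n => μ) = μ.real A := by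
  simp_rw [empMeas_apply_toReal _ hA]
  have hterm : ∀ i, ∫ x, A.indicator (1 : Ω → ℝ) (x i) ∂(Measure.pi fun _ : Fin n => μ)
      = μ.real A := fun i => by
    rw [integral_comp_eval (memLp_indicator_one μ hA 1).aestronglyMeasurable,
      integral_indicator_one hA]
  have hint : ∀ i, Integrable (fun x : Fin n → Ω => A.indicator (1 : Ω → ℝ) (x i))
      (Measure.pi fun _ : Fin n => μ) := fun i => memLp_one_iff_integrable.mp
    ((memLp_indicator_one μ hA 1).comp_measurePreserving (measurePreserving_eval _ i))
  rw [integral_const_mul, integral_finsetSum _ fun i _ => hint i]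
  simp only [hterm, Finset.sum_const, Finset.card_univ, Fintype.card_fin, nsmul_eq_mul]
  field_simp

lemma variance_empMeas_apply_toReal_le (hA : MeasurableSet A) :
    Var[fun x => (empMeas x A).toReal; Measure.pi fun _ : Fin n => μ] ≤ μ.real A / n := by
  have hsum : (fun x : Fin n → Ω => (empMeas x A).toReal) =
      fun x => (n : ℝ)⁻¹ * (∑ i, fun ω : Fin n → Ω => A.indicator 1 (ω i)) x := by
    ext x; simp [empMeas_apply_toReal x hA]
  rw [hsum, variance_const_mul, variance_sum_pi fun _ => memLp_indicator_one μ hA 2]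
  calc ((n : ℝ)⁻¹) ^ 2 * ∑ _i : Fin n, Var[A.indicator 1; μ]
      ≤ ((n : ℝ)⁻¹) ^ 2 * ∑ _i : Fin n, μ.real A := by
        gcongr; exact variance_indicator_one_le μ hA
    _ = μ.real A / n := by
        rw [Finset.sum_const, Finset.card_univ, Fintype.card_fin, nsmul_eq_mul]
        rcases eq_or_ne (n : ℝ) 0 with h | h
        · simp [h]
        · field_simp

lemma integral_abs_empMeas_apply_toReal_sub_le (hn : n ≠ 0) (hA : MeasurableSet A) :
    ∫ x, |(empMeas x A).toReal - μ.real A| ∂(Measure.pi fun _ : Fin n => μ)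
      ≤ √(μ.real A / n) := by
  set P := Measure.pi fun _ : Fin n => μ
  calc ∫ x, |(empMeas x A).toReal - μ.real A| ∂P
      = ∫ x, |(empMeas x A).toReal - P[fun x => (empMeas x A).toReal]| ∂P := by
        rw [integral_empMeas_apply_toReal μ hn hA]
    _ ≤ √Var[fun x => (empMeas x A).toReal; P] :=
        integral_abs_sub_integral_le_sqrt_variance (memLp_empMeas_apply_toReal μ hA 2)
    _ ≤ √(μ.real A / n) := Real.sqrt_le_sqrt (variance_empMeas_apply_toReal_le μ hA)

end EmpiricalMeasure

/-- Let `μ` be a probability measure, `X₁, …, X_n` i.i.d. with law `μ` and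
`μ_n` the empirical measure.  If `A₁, …, A_m` are pairwise disjoint measurable sets with
union `T`, then `E[Σ_j |μ_n(A_j) − μ(A_j)|] ≤ √(m ⋅ μ(T) / n)`. -/
theorem expected_empirical_partition_deviation
    {Ω : Type*} [MeasurableSpace Ω] (μ : Measure Ω) [IsProbabilityMeasure μ]
    (n m : ℕ) (hn : 0 < n)
    (A : Fin m → Set Ω) (hA : ∀ j, MeasurableSet (A j))
    (hdisj : Pairwise (Disjoint on A)) :
    (∫ x : Fin n → Ω, (∑ j, |((empMeas x) (A j)).toReal - (μ (A j)).toReal|)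
        ∂(Measure.pi fun _ => μ))
      ≤ Real.sqrt ((m : ℝ) * (μ (⋃ j, A j)).toReal / (n : ℝ)) := by
  have hint : ∀ j, Integrable (fun x : Fin n → Ω => |(empMeas x (A j)).toReal - μ.real (A j)|)
      (Measure.pi fun _ => μ) := fun j =>
    (((memLp_empMeas_apply_toReal μ (hA j) 2).sub (memLp_const _)).integrable one_le_two).abs
  calc (∫ x : Fin n → Ω, (∑ j, |((empMeas x) (A j)).toReal - (μ (A j)).toReal|)
        ∂(Measure.pi fun _ => μ))
      = ∑ j, ∫ x : Fin n → Ω, |(empMeas x (A j)).toReal - μ.real (A j)|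
          ∂(Measure.pi fun _ => μ) := integral_finsetSum _ fun j _ => hint j
    _ ≤ ∑ j, √(μ.real (A j) / n) := Finset.sum_le_sum fun j _ =>
        integral_abs_empMeas_apply_toReal_sub_le μ hn.ne' (hA j)
    _ ≤ √(m * ∑ j, μ.real (A j) / n) := by
        simpa only [Finset.card_univ, Fintype.card_fin] using
          Real.sum_sqrt_le_sqrt_card_mul_sum (f := fun j => μ.real (A j) / n) Finset.univ
            fun j => by positivity
    _ = √(m * μ.real (⋃ j, A j) / n) := by
        rw [← Finset.sum_div, measureReal_iUnion_fintype hdisj hA, mul_div_assoc]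
end
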